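/- arXiv:1703.09330 — 3 statements merged into one kernel-verified Lean document; each statement's English description precedes it below -/
import Mathlib

section
/- Let G be a group and f, g, h ∈ G be nontrivial elements such that the six values q_f(g), q_g(f), q_g(h), q_h(g), q_f(h), q_h(f) are all finite (hence all ≥ 1). Then, with d(x, y) := log(max{q_y(x), q_x(y)}) (real logarithm of the natural-number value), the triangle inequality holds: d(f, h) ≤ d(f, g) + d(g, h). -/
/-!
Every element conjugate to `g` or `g⁻¹` has `q_K`-norm at most `q_K(g)`, and `q_K` is
subadditive, so writing `h` as a product of `q_g(h)` such elements gives the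
submultiplicativity `q_f(h) ≤ q_f(g) · q_g(h)`. Hence the symmetrized norms satisfy
`max {q_h(f), q_f(h)} ≤ max {q_g(f), q_f(g)} · max {q_h(g), q_g(h)}`, and taking logarithms
turns this into the triangle inequality.
-/

/-- The conjugation-generated norm `q_K` : the infimum in `ℕ∞` of the lengths of
expressions of `g` as a product of elements each conjugate to an element of `K`
or to the inverse of an element of `K`. -/
noncomputable def qNorm {G : Type*} [Group G] (K : Set G) (g : G) : ℕ∞ :=
  sInf {n : ℕ∞ | ∃ l : List G, (l.length : ℕ∞) = n ∧ l.prod = g ∧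
    ∀ x ∈ l, ∃ k ∈ K, IsConj k x ∨ IsConj k⁻¹ x}

theorem IsConj.inv {G : Type*} [Group G] {a b : G} (h : IsConj a b) : IsConj a⁻¹ b⁻¹ := by
  obtain ⟨c, rfl⟩ := isConj_iff.1 h
  exact isConj_iff.2 ⟨c, conj_inv.symm⟩

section QNorm

variable {G : Type*} [Group G] {K : Set G}

def symmConjugates (K : Set G) : Set G := {x | ∃ k ∈ K, IsConj k x ∨ IsConj k⁻¹ x}

theorem mem_symmConjugates_of_isConj {x y : G} (hx : x ∈ symmConjugates K) (hxy : IsConj x y) :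
    y ∈ symmConjugates K := by
  obtain ⟨k, hk, hkx | hkx⟩ := hx
  · exact ⟨k, hk, .inl (hkx.trans hxy)⟩
  · exact ⟨k, hk, .inr (hkx.trans hxy)⟩

theorem inv_mem_symmConjugates {x : G} (hx : x ∈ symmConjugates K) :
    x⁻¹ ∈ symmConjugates K := by
  obtain ⟨k, hk, hkx | hkx⟩ := hx
  · exact ⟨k, hk, .inr hkx.inv⟩
  · exact ⟨k, hk, .inl (by simpa using hkx.inv)⟩

theorem qNorm_list_prod_le_length {l : List G} (hl : ∀ x ∈ l, x ∈ symmConjugates K) :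
    qNorm K l.prod ≤ l.length :=
  sInf_le ⟨l, rfl, rfl, hl⟩

theorem exists_list_of_qNorm_ne_top {g : G} (hg : qNorm K g ≠ ⊤) :
    ∃ l : List G, (l.length : ℕ∞) = qNorm K g ∧ l.prod = g ∧
      ∀ x ∈ l, x ∈ symmConjugates K := by
  set S := {n : ℕ∞ | ∃ l : List G, (l.length : ℕ∞) = n ∧ l.prod = g ∧
    ∀ x ∈ l, x ∈ symmConjugates K}
  change sInf S ≠ ⊤ at hg
  exact csInf_mem (s := S) (Set.nonempty_iff_ne_empty.2 fun he => hg (by rw [he, sInf_empty]))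

theorem qNorm_one : qNorm K 1 = 0 :=
  nonpos_iff_eq_zero.1 (qNorm_list_prod_le_length (l := []) (by simp))

theorem qNorm_ne_zero {g : G} (hg : g ≠ 1) : qNorm K g ≠ 0 := by
  intro h0
  obtain ⟨l, hlen, rfl, -⟩ := exists_list_of_qNorm_ne_top (h0 ▸ ENat.zero_ne_top)
  rw [h0, Nat.cast_eq_zero, List.length_eq_zero_iff] at hlen
  exact hg (hlen ▸ List.prod_nil)

theorem qNorm_mul_le (a b : G) : qNorm K (a * b) ≤ qNorm K a + qNorm K b := by
  by_cases ha : qNorm K a = ⊤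
  · simp [ha]
  by_cases hb : qNorm K b = ⊤
  · simp [hb]
  obtain ⟨l, hl, rfl, hlK⟩ := exists_list_of_qNorm_ne_top ha
  obtain ⟨m, hm, rfl, hmK⟩ := exists_list_of_qNorm_ne_top hb
  calc qNorm K (l.prod * m.prod) = qNorm K (l ++ m).prod := by rw [List.prod_append]
    _ ≤ (l ++ m).length := qNorm_list_prod_le_length (List.forall_mem_append.2 ⟨hlK, hmK⟩)
    _ = qNorm K l.prod + qNorm K m.prod := by rw [List.length_append, Nat.cast_add, hl, hm]

theorem qNorm_list_prod_le (l : List G) : qNorm K l.prod ≤ (l.map (qNorm K)).sum := by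
  induction l with
  | nil => simp [qNorm_one]
  | cons x l ih =>
    rw [List.prod_cons, List.map_cons, List.sum_cons]
    exact (qNorm_mul_le x l.prod).trans (add_le_add_right ih _)

theorem qNorm_le_of_isConj {a b : G} (hab : IsConj a b) : qNorm K b ≤ qNorm K a := by
  by_cases ha : qNorm K a = ⊤
  · simp [ha]
  obtain ⟨l, hl, rfl, hlK⟩ := exists_list_of_qNorm_ne_top ha
  obtain ⟨c, rfl⟩ := isConj_iff.1 hab
  have hconj : ∀ x, IsConj x (MulAut.conj c x) := fun x => isConj_iff.2 ⟨c, rfl⟩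
  calc qNorm K (c * l.prod * c⁻¹) = qNorm K (l.map (MulAut.conj c)).prod := by
        rw [← map_list_prod, MulAut.conj_apply]
    _ ≤ (l.map (MulAut.conj c)).length := qNorm_list_prod_le_length <|
        List.forall_mem_map.2 fun x hx => mem_symmConjugates_of_isConj (hlK x hx) (hconj x)
    _ = qNorm K l.prod := by rw [List.length_map, hl]

theorem qNorm_inv_le (a : G) : qNorm K a⁻¹ ≤ qNorm K a := by
  by_cases ha : qNorm K a = ⊤
  · simp [ha]
  obtain ⟨l, hl, rfl, hlK⟩ := exists_list_of_qNorm_ne_top ha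
  calc qNorm K l.prod⁻¹ = qNorm K (l.map (·⁻¹)).reverse.prod := by rw [List.prod_inv_reverse]
    _ ≤ (l.map (·⁻¹)).reverse.length := qNorm_list_prod_le_length fun x hx => by
        obtain ⟨y, hy, rfl⟩ := List.mem_map.1 (List.mem_reverse.1 hx)
        exact inv_mem_symmConjugates (hlK y hy)
    _ = qNorm K l.prod := by rw [List.length_reverse, List.length_map, hl]

theorem qNorm_le_of_mem_symmConjugates_singleton {g x : G} (hx : x ∈ symmConjugates {g}) :
    qNorm K x ≤ qNorm K g := by
  obtain ⟨k, rfl, hkx | hkx⟩ := hx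
  · exact qNorm_le_of_isConj hkx
  · exact (qNorm_le_of_isConj hkx).trans (qNorm_inv_le k)

theorem qNorm_le_mul_qNorm_singleton {g h : G} (hgh : qNorm {g} h ≠ ⊤) :
    qNorm K h ≤ qNorm K g * qNorm {g} h := by
  obtain ⟨l, hl, rfl, hlg⟩ := exists_list_of_qNorm_ne_top hgh
  calc qNorm K l.prod ≤ (l.map (qNorm K)).sum := qNorm_list_prod_le l
    _ ≤ (l.map (qNorm K)).length • qNorm K g :=
        List.sum_le_card_nsmul _ _ <| List.forall_mem_map.2 fun x hx =>
          qNorm_le_of_mem_symmConjugates_singleton (hlg x hx)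
    _ = qNorm K g * qNorm {g} l.prod := by rw [nsmul_eq_mul, List.length_map, hl, mul_comm]

theorem max_qNorm_le_mul_max_qNorm {f g h : G} (hgf : qNorm {g} f ≠ ⊤)
    (hgh : qNorm {g} h ≠ ⊤) :
    max (qNorm {h} f) (qNorm {f} h) ≤
      max (qNorm {g} f) (qNorm {f} g) * max (qNorm {h} g) (qNorm {g} h) := by
  refine max_le ?_ ?_
  · calc qNorm {h} f ≤ qNorm {h} g * qNorm {g} f := qNorm_le_mul_qNorm_singleton hgf
      _ ≤ _ := by rw [mul_comm]; exact mul_le_mul' (le_max_left _ _) (le_max_left _ _)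
  · calc qNorm {f} h ≤ qNorm {f} g * qNorm {g} h := qNorm_le_mul_qNorm_singleton hgh
      _ ≤ _ := mul_le_mul' (le_max_right _ _) (le_max_right _ _)

end QNorm

theorem Real.log_toNat_le_add_of_le_mul {a b c : ℕ∞} (ha : a ≠ 0) (hb : b ≠ 0)
    (ha' : a ≠ ⊤) (hb' : b ≠ ⊤) (h : c ≤ a * b) :
    log c.toNat ≤ log a.toNat + log b.toNat := by
  lift a to ℕ using ha'
  lift b to ℕ using hb'
  have hc : c.toNat ≤ a * b := by
    exact_mod_cast ENat.toNat_le_toNat h (ENat.natCast_ne_top (a * b))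
  rcases c.toNat.eq_zero_or_pos with hc0 | hc0
  · rw [hc0, Nat.cast_zero, log_zero]
    exact add_nonneg (log_natCast_nonneg _) (log_natCast_nonneg _)
  · rw [ENat.toNat_natCast, ENat.toNat_natCast,
      ← log_mul (by exact_mod_cast ha) (by exact_mod_cast hb)]
    exact log_le_log (by exact_mod_cast hc0) (by exact_mod_cast hc)

theorem tsuboi_triangle_inequality_general {G : Type*} [Group G] (f g h : G)
    (hg : g ≠ 1)
    (h1 : qNorm {f} g ≠ ⊤) (h2 : qNorm {g} f ≠ ⊤)
    (h3 : qNorm {g} h ≠ ⊤) (h4 : qNorm {h} g ≠ ⊤)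
    (d : G → G → ℝ)
    (hd : ∀ x y : G, d x y = Real.log ((max (qNorm {y} x) (qNorm {x} y)).toNat)) :
    d f h ≤ d f g + d g h := by
  rw [hd f h, hd f g, hd g h]
  refine Real.log_toNat_le_add_of_le_mul ?_ ?_ (max_lt h2.lt_top h1.lt_top).ne
    (max_lt h4.lt_top h3.lt_top).ne (max_qNorm_le_mul_max_qNorm h2 h3)
  · exact (pos_iff_ne_zero.2 (qNorm_ne_zero hg)).trans_le (le_max_right _ _) |>.ne'
  · exact (pos_iff_ne_zero.2 (qNorm_ne_zero hg)).trans_le (le_max_left _ _) |>.ne'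

/-- Tsuboi's function `d(x, y) = log (max {q_y(x), q_x(y)})` satisfies the triangle
inequality on nontrivial elements with finite mutual norms. -/
theorem tsuboi_triangle_inequality {G : Type*} [Group G] (f g h : G)
    (hf : f ≠ 1) (hg : g ≠ 1) (hh : h ≠ 1)
    (h1 : qNorm {f} g ≠ ⊤) (h2 : qNorm {g} f ≠ ⊤)
    (h3 : qNorm {g} h ≠ ⊤) (h4 : qNorm {h} g ≠ ⊤)
    (h5 : qNorm {f} h ≠ ⊤) (h6 : qNorm {h} f ≠ ⊤)
    (d : G → G → ℝ)
    (hd : ∀ x y : G, d x y = Real.log ((max (qNorm {y} x) (qNorm {x} y)).toNat)) :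
    d f h ≤ d f g + d g h :=
  tsuboi_triangle_inequality_general f g h hg h1 h2 h3 h4 d hd
end

section
/- Let G be a group admitting a homogeneous quasi-morphism φ : G → ℝ (finite defect D(φ) and φ(gᵖ) = p·φ(g) for all p ∈ ℤ) and let g ∈ G with φ(g) ≠ 0. Then for every f ∈ G and every natural number M, there exists p ∈ ℕ such that either q_f(gᵖ) = ∞ or q_f(gᵖ) > M; in other words, the values q_f(gᵖ) are unbounded in p. In particular, the conjugation-generated norms on G are unbounded (G is not uniformly simple). -/
/-!
A homogeneous quasi-morphism is conjugation invariant, so it is bounded by `|φ f|` on the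
conjugates of `f^{±1}`, and a product of `n` of them has `|φ| ≤ n (|φ f| + D)`. Since
`|φ (gᵖ)| = p |φ g|` grows linearly in `p`, the length `q_f (gᵖ)` must grow too.
-/

theorem eq_of_forall_nat_mul_abs_sub_le {a b C : ℝ} (h : ∀ n : ℕ, n * |a - b| ≤ C) :
    a = b := by
  by_contra hne
  have hpos : 0 < |a - b| := abs_pos.mpr (sub_ne_zero.mpr hne)
  obtain ⟨n, hn⟩ := exists_nat_gt (C / |a - b|)
  exact (h n).not_gt ((div_lt_iff₀ hpos).mp hn)

theorem le_qNorm {G : Type*} [Group G] {K : Set G} {g : G} {n : ℕ∞}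
    (h : ∀ l : List G, l.prod = g → (∀ x ∈ l, ∃ k ∈ K, IsConj k x ∨ IsConj k⁻¹ x) →
      n ≤ l.length) :
    n ≤ qNorm K g :=
  le_sInf fun _ ⟨l, hlen, hprod, hconj⟩ => hlen ▸ h l hprod hconj

section Quasimorphism

variable {G : Type*} [Group G]

def IsHomogeneous (φ : G → ℝ) : Prop :=
  ∀ (g : G) (p : ℤ), φ (g ^ p) = p * φ g

def HasDefectAtMost (φ : G → ℝ) (D : ℝ) : Prop :=
  ∀ g h : G, |φ (g * h) - φ g - φ h| ≤ D

variable {φ : G → ℝ} {D : ℝ}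

theorem IsHomogeneous.map_one (hφ : IsHomogeneous φ) : φ 1 = 0 := by
  simpa using hφ 1 0

theorem IsHomogeneous.map_inv (hφ : IsHomogeneous φ) (x : G) : φ x⁻¹ = -φ x := by
  simpa using hφ x (-1)

theorem IsHomogeneous.map_pow (hφ : IsHomogeneous φ) (x : G) (n : ℕ) : φ (x ^ n) = n * φ x := by
  simpa using hφ x n

theorem HasDefectAtMost.abs_map_mul_le (hD : HasDefectAtMost φ D) (x y : G) :
    |φ (x * y)| ≤ |φ x| + |φ y| + D := by
  have := hD x y
  have := abs_add_le (φ x) (φ y)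
  have := abs_sub_abs_le_abs_sub (φ (x * y)) (φ x + φ y)
  rw [← sub_sub] at this
  linarith

theorem HasDefectAtMost.nonneg (hD : HasDefectAtMost φ D) : 0 ≤ D :=
  (abs_nonneg _).trans (hD 1 1)

theorem IsHomogeneous.map_conj (hφ : IsHomogeneous φ) (hD : HasDefectAtMost φ D) (c x : G) :
    φ (c * x * c⁻¹) = φ x := by
  -- `φ (c y c⁻¹)` is within `2D` of `φ c + φ y + φ c⁻¹ = φ y`; for `y = xⁿ` the error does
  -- not grow with `n` while the left side scales by `n`.
  have hbdd : ∀ y, |φ (c * y * c⁻¹) - φ y| ≤ 2 * D := fun y => by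
    have h₁ := hD c (y * c⁻¹)
    have h₂ := hD y c⁻¹
    rw [hφ.map_inv] at h₂
    rw [abs_le] at h₁ h₂
    rw [mul_assoc, abs_le]
    constructor <;> linarith
  refine eq_of_forall_nat_mul_abs_sub_le (C := 2 * D) fun n => ?_
  have := hbdd (x ^ n)
  rwa [← conj_pow, hφ.map_pow, hφ.map_pow, ← mul_sub, abs_mul, Nat.abs_cast] at this

theorem IsHomogeneous.map_of_isConj (hφ : IsHomogeneous φ) (hD : HasDefectAtMost φ D)
    {x y : G} (h : IsConj x y) : φ y = φ x := by
  obtain ⟨c, rfl⟩ := isConj_iff.mp h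
  exact hφ.map_conj hD c x

theorem IsHomogeneous.abs_map_list_prod_le (hφ : IsHomogeneous φ) (hD : HasDefectAtMost φ D)
    {B : ℝ} {l : List G} (hl : ∀ x ∈ l, |φ x| ≤ B) :
    |φ l.prod| ≤ l.length * (B + D) := by
  induction l with
  | nil => simp [hφ.map_one]
  | cons a l ih =>
    have ha := hl a List.mem_cons_self
    have hl' := ih fun x hx => hl x (List.mem_cons_of_mem a hx)
    have := hD.abs_map_mul_le a l.prod
    rw [List.prod_cons, List.length_cons]
    push_cast
    linarith

theorem IsHomogeneous.abs_map_of_isConj_or_isConj_inv (hφ : IsHomogeneous φ)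
    (hD : HasDefectAtMost φ D) {k y : G} (h : IsConj k y ∨ IsConj k⁻¹ y) : |φ y| = |φ k| := by
  rcases h with h | h
  · rw [hφ.map_of_isConj hD h]
  · rw [hφ.map_of_isConj hD h, hφ.map_inv, abs_neg]

theorem IsHomogeneous.lt_qNorm_of_mul_lt_abs (hφ : IsHomogeneous φ) (hD : HasDefectAtMost φ D)
    {K : Set G} {B : ℝ} (hB : 0 ≤ B) (hK : ∀ k ∈ K, |φ k| ≤ B) {x : G} {M : ℕ}
    (hM : M * (B + D) < |φ x|) :
    (M : ℕ∞) < qNorm K x := by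
  rw [← ENat.add_one_le_iff (ENat.natCast_ne_top M)]
  refine le_qNorm fun l hprod hconj => ?_
  have hbound : |φ x| ≤ l.length * (B + D) := by
    refine hprod ▸ hφ.abs_map_list_prod_le hD fun y hy => ?_
    obtain ⟨k, hk, hky⟩ := hconj y hy
    exact (hφ.abs_map_of_isConj_or_isConj_inv hD hky).trans_le (hK k hk)
  have hlen : M < l.length := by
    by_contra! hle
    have : (l.length : ℝ) * (B + D) ≤ M * (B + D) :=
      mul_le_mul_of_nonneg_right (by exact_mod_cast hle) (add_nonneg hB hD.nonneg)
    linarith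
  exact_mod_cast hlen

end Quasimorphism

/-- If `G` admits a homogeneous quasi-morphism `φ` with `φ(g) ≠ 0`, then for every
`f ∈ G` the values `q_f(gᵖ)` are unbounded in `p`: for every `M` there is `p` with
`q_f(gᵖ) = ∞` or `q_f(gᵖ) > M`.  In particular `G` is not uniformly simple. -/
theorem qNorm_unbounded_of_quasimorphism {G : Type*} [Group G]
    (φ : G → ℝ)
    (hqm : ∃ D : ℝ, ∀ g h : G, |φ (g * h) - φ g - φ h| ≤ D)
    (hhom : ∀ (g : G) (p : ℤ), φ (g ^ p) = p * φ g)
    (g : G) (hg : φ g ≠ 0) :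
    ∀ (f : G) (M : ℕ), ∃ p : ℕ,
      qNorm {f} (g ^ p) = ⊤ ∨ (M : ℕ∞) < qNorm {f} (g ^ p) := by
  intro f M
  obtain ⟨D, hD⟩ := hqm
  have hφ : IsHomogeneous φ := hhom
  obtain ⟨p, hp⟩ := exists_nat_gt (M * (|φ f| + D) / |φ g|)
  refine ⟨p, Or.inr (hφ.lt_qNorm_of_mul_lt_abs hD (abs_nonneg _) (by rintro k rfl; rfl) ?_)⟩
  rw [hφ.map_pow, abs_mul, Nat.abs_cast]
  exact (div_lt_iff₀ (abs_pos.mpr hg)).mp hp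
end

section
/- Let (X, d) be a metric space, x : ℕ → X and y : ℕ → X sequences in X, and C₁ > 0, C₂ > 0, C₃ ∈ ℝ constants such that: (i) d(x_n, x_m) ≥ C₁·|n − m| for all n, m; (ii) d(x_n, x_{n+1}) ≤ C₂ for all n; (iii) d(x_n, y_m) ≥ log m + C₃ for all n and all m ≥ 1. Then there is no quasi-isometric embedding of X into the half line: there exist no map Φ : X → ℝ and constants A ≥ 1, B ≥ 0 such that Φ(p) ≥ 0 for all p ∈ X and (1/A)·d(p, q) − B ≤ |Φ(p) − Φ(q)| ≤ A·d(p, q) + B for all p, q ∈ X. -/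
/-!
Put `f n = Φ (x n)`. By (i) and the lower quasi-isometry bound, `f` tends to infinity, and by (ii)
and the upper bound its increments are at most `A C₂ + B`, so every point of `[0, ∞)`, in
particular every `Φ (y m)`, lies within a fixed distance `K` of some `f n`; the lower
bound then gives `d(x n, y m) ≤ A (K + B)` uniformly in `m`, which (iii) forbids as
`log m → ∞`.
-/

open Filter

theorem exists_abs_sub_le_of_succ_sub_le {f : ℕ → ℝ} {S t : ℝ}
    (hstep : ∀ n, f (n + 1) - f n ≤ S)
    (h0 : f 0 < t) (hreach : ∃ N, t ≤ f N) : ∃ n, |f n - t| ≤ S := by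
  classical
  obtain ⟨k, hk⟩ : ∃ k, Nat.find hreach = k + 1 :=
    Nat.exists_eq_succ_of_ne_zero fun h => (Nat.find_spec hreach).not_gt (h ▸ h0)
  have hreached : t ≤ f (k + 1) := hk ▸ Nat.find_spec hreach
  have hbelow : f k < t := not_le.mp (Nat.find_min hreach (by omega))
  exact ⟨k + 1, abs_le.mpr ⟨by linarith [hstep k], by linarith [hstep k]⟩⟩

theorem exists_abs_sub_le_max_of_tendsto_atTop {f : ℕ → ℝ} {S t : ℝ}
    (hstep : ∀ n, f (n + 1) - f n ≤ S) (htend : Tendsto f atTop atTop)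
    (ht : 0 ≤ t) : ∃ n, |f n - t| ≤ max (f 0) S := by
  rcases le_or_gt t (f 0) with hle | hlt
  · exact ⟨0, by rw [abs_of_nonneg (by linarith)]; linarith [le_max_left (f 0) S]⟩
  · obtain ⟨n, hn⟩ :=
      exists_abs_sub_le_of_succ_sub_le hstep hlt (htend.eventually_ge_atTop t).exists
    exact ⟨n, hn.trans (le_max_right _ _)⟩

section QuasiIsometry

variable {X : Type*} [PseudoMetricSpace X] {Φ : X → ℝ} {A B : ℝ}

theorem tendsto_atTop_comp_of_coarse_lower_bound (hA : 0 < A) (hΦ : ∀ p, 0 ≤ Φ p)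
    (hlow : ∀ p q, (1 / A) * dist p q - B ≤ |Φ p - Φ q|) {x : ℕ → X} {p : X}
    (hx : Tendsto (fun n => dist (x n) p) atTop atTop) :
    Tendsto (fun n => Φ (x n)) atTop atTop := by
  refine tendsto_atTop_mono (fun n => ?_)
    (tendsto_atTop_add_const_right _ (-(B + Φ p)) (hx.const_mul_atTop (one_div_pos.mpr hA)))
  have hsub : |Φ (x n) - Φ p| ≤ Φ (x n) + Φ p :=
    abs_le.mpr ⟨by linarith [hΦ p, hΦ (x n)], by linarith [hΦ p, hΦ (x n)]⟩
  linarith [hlow (x n) p]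

theorem dist_le_of_coarse_lower_bound (hA : 0 < A)
    (hlow : ∀ p q, (1 / A) * dist p q - B ≤ |Φ p - Φ q|)
    {p q : X} {K : ℝ} (hK : |Φ p - Φ q| ≤ K) : dist p q ≤ A * (K + B) := by
  have h : (1 / A) * dist p q ≤ K + B := by linarith [hlow p q]
  rwa [one_div, inv_mul_le_iff₀ hA] at h

end QuasiIsometry

theorem no_quasi_isometric_embedding_into_half_line_general
    {X : Type*} [MetricSpace X] (x y : ℕ → X) (C₁ C₂ C₃ : ℝ)
    (hC₁ : 0 < C₁)
    (h1 : ∀ n m : ℕ, C₁ * |(n : ℝ) - (m : ℝ)| ≤ dist (x n) (x m))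
    (h2 : ∀ n : ℕ, dist (x n) (x (n + 1)) ≤ C₂)
    (h3 : ∀ n m : ℕ, 1 ≤ m → Real.log m + C₃ ≤ dist (x n) (y m)) :
    ¬ ∃ (Φ : X → ℝ) (A B : ℝ), 1 ≤ A ∧ 0 ≤ B ∧ (∀ p : X, 0 ≤ Φ p) ∧
      ∀ p q : X, (1 / A) * dist p q - B ≤ |Φ p - Φ q| ∧
        |Φ p - Φ q| ≤ A * dist p q + B := by
  rintro ⟨Φ, A, B, hA, -, hΦ, hQI⟩
  have hA0 : 0 < A := one_pos.trans_le hA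
  have hlow : ∀ p q, (1 / A) * dist p q - B ≤ |Φ p - Φ q| := fun p q => (hQI p q).1
  have hstep : ∀ n, Φ (x (n + 1)) - Φ (x n) ≤ A * C₂ + B := fun n =>
    calc Φ (x (n + 1)) - Φ (x n) ≤ |Φ (x n) - Φ (x (n + 1))| := by
          rw [abs_sub_comm]; exact le_abs_self _
      _ ≤ A * dist (x n) (x (n + 1)) + B := (hQI _ _).2
      _ ≤ A * C₂ + B := by gcongr; exact h2 n
  have hray : Tendsto (fun n => dist (x n) (x 0)) atTop atTop :=
    tendsto_atTop_mono (fun n => by simpa using h1 n 0)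
      (tendsto_natCast_atTop_atTop.const_mul_atTop hC₁)
  have htend := tendsto_atTop_comp_of_coarse_lower_bound hA0 hΦ hlow hray
  set K := max (Φ (x 0)) (A * C₂ + B)
  obtain ⟨m, hm1, hlog⟩ : ∃ m : ℕ, 1 ≤ m ∧ A * (K + B) - C₃ < Real.log m :=
    ((eventually_ge_atTop 1).and ((Real.tendsto_log_atTop.comp
      tendsto_natCast_atTop_atTop).eventually_gt_atTop _)).exists
  obtain ⟨n, hn⟩ := exists_abs_sub_le_max_of_tendsto_atTop hstep htend (hΦ (y m))
  linarith [h3 n m hm1, dist_le_of_coarse_lower_bound hA0 hlow hn]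

/-- A metric space containing a quasi-geodesic ray `x` together with a sequence `y`
whose distances to all `x n` grow like `log m` admits no quasi-isometric embedding
into the half line `[0, ∞)`. -/
theorem no_quasi_isometric_embedding_into_half_line
    {X : Type*} [MetricSpace X] (x y : ℕ → X) (C₁ C₂ C₃ : ℝ)
    (hC₁ : 0 < C₁) (hC₂ : 0 < C₂)
    (h1 : ∀ n m : ℕ, C₁ * |(n : ℝ) - (m : ℝ)| ≤ dist (x n) (x m))
    (h2 : ∀ n : ℕ, dist (x n) (x (n + 1)) ≤ C₂)
    (h3 : ∀ n m : ℕ, 1 ≤ m → Real.log m + C₃ ≤ dist (x n) (y m)) :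
    ¬ ∃ (Φ : X → ℝ) (A B : ℝ), 1 ≤ A ∧ 0 ≤ B ∧ (∀ p : X, 0 ≤ Φ p) ∧
      ∀ p q : X, (1 / A) * dist p q - B ≤ |Φ p - Φ q| ∧
        |Φ p - Φ q| ≤ A * dist p q + B :=
  no_quasi_isometric_embedding_into_half_line_general x y C₁ C₂ C₃ hC₁ h1 h2 h3
end
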